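/- Let m ≥ 4 be even, h = m/2, n = q^m - 1. The number of integers a with q^h + 1 ≤ a ≤ q^{h+1}, q ∤ a, that are not coset leaders of their q-cyclotomic cosets modulo n equals (q-1)(q-2)/2. Consequently the smallest a with q ∤ a that is not a coset leader is 2q^{m/2} + 1. -/

import Mathlib

/-- The q-cyclotomic coset of a modulo n: {a * q^j mod n : j ≥ 0}. -/
def cyclCoset (q n a : ℕ) : Finset ℕ :=
  (Finset.range n).image (fun j => a * q ^ j % n)

/-- a is the coset leader (smallest element) of its q-cyclotomic coset modulo n. -/
def IsCosetLeader (q n a : ℕ) : Prop :=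
  ∀ j : ℕ, a ≤ a * q ^ j % n

/-!
Modulo `q ^ m - 1`, multiplication by `q ^ j` rotates the `m` base-`q` digits of `a` by `j`
places. For `a < q ^ (h + 1)` with `q ∤ a`, write `a = s * q ^ h + t` with `t < q ^ h`: rotating
by `j < h` gives `a * q ^ j ≥ a`, rotating by `j > h` moves the nonzero last digit to position
at least `h + 1`, and rotating by `h` gives `t * q ^ h + s`, which is smaller than `a` exactly
when `t < s`. Hence the non-leaders in the window are the numbers `s * q ^ h + t` with
`1 ≤ t < s < q`, counted by `∑_{s < q} (s - 1)`; and below `2 * q ^ h + 1` the condition `t < s`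
is incompatible with `q ∤ a`, while `2 * q ^ h + 1` itself (`s = 2`, `t = 1`) is not a leader.
-/

lemma mul_pow_mod_pow_sub_one_eq_mul_pow_mod {q : ℕ} (hq : 0 < q) (a j m : ℕ) :
    a * q ^ j % (q ^ m - 1) = a * q ^ (j % m) % (q ^ m - 1) := by
  have hone : q ^ m ≡ 1 [MOD q ^ m - 1] := Nat.modEq_sub (Nat.one_le_pow _ _ hq)
  conv_lhs => rw [← Nat.mod_add_div j m, pow_add, pow_mul, ← mul_assoc]
  have := (hone.pow (j / m)).mul_left (a * q ^ (j % m))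
  rwa [one_pow, mul_one] at this

-- `r + P * d` and `d + r * Q` are the two block orders of one digit string, and only the
-- string of top digits reaches `P * Q - 1`.
lemma swap_blocks_add_one_lt {P Q d r : ℕ} (hr : r < P) (ha : r + P * d + 1 < P * Q) :
    d + r * Q + 1 < P * Q := by
  have hd : d < Q := by
    by_contra! h
    nlinarith [Nat.mul_le_mul_left P h]
  rcases Nat.lt_or_ge (d + 1) Q with h | h
  · nlinarith [Nat.mul_le_mul_right Q hr]
  · obtain rfl : Q = d + 1 := by omega
    have : r + 2 ≤ P := by nlinarith
    nlinarith [Nat.mul_le_mul_right (d + 1) this]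

lemma mul_pow_mod_pow_sub_one {q m j a : ℕ} (hj : j ≤ m) (ha : a < q ^ m - 1) :
    a * q ^ j % (q ^ m - 1) = a / q ^ (m - j) + a % q ^ (m - j) * q ^ j := by
  have hPQ : q ^ (m - j) * q ^ j = q ^ m := by rw [← pow_add, Nat.sub_add_cancel hj]
  have hP : 0 < q ^ (m - j) := by
    apply Nat.pos_of_ne_zero; intro h0; rw [h0, zero_mul] at hPQ; omega
  have hdiv := Nat.mod_add_div a (q ^ (m - j))
  have hlt := swap_blocks_add_one_lt (Nat.mod_lt a hP) (Q := q ^ j) (by rw [hdiv, hPQ]; omega)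
  obtain ⟨N, hN⟩ : ∃ N, q ^ m = N + 1 := ⟨q ^ m - 1, by omega⟩
  rw [hPQ, hN] at hlt
  rw [hN] at hPQ
  rw [hN, Nat.add_sub_cancel]
  have hsplit : a * q ^ j =
      N * (a / q ^ (m - j)) + (a / q ^ (m - j) + a % q ^ (m - j) * q ^ j) := by
    linear_combination (q ^ j) * hdiv.symm + (a / q ^ (m - j)) * hPQ
  rw [hsplit, Nat.mul_add_mod, Nat.mod_eq_of_lt (by omega)]

lemma isCosetLeader_iff_forall_lt {q m a : ℕ} (ha : a < q ^ m - 1) :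
    IsCosetLeader q (q ^ m - 1) a ↔
      ∀ j < m, a ≤ a / q ^ (m - j) + a % q ^ (m - j) * q ^ j := by
  have hm : 0 < m := Nat.pos_of_ne_zero (by rintro rfl; simp at ha)
  have hq : 0 < q := Nat.pos_of_ne_zero (by rintro rfl; simp [hm.ne'] at ha)
  refine ⟨fun H j hj => mul_pow_mod_pow_sub_one hj.le ha ▸ H j, fun H j => ?_⟩
  rw [mul_pow_mod_pow_sub_one_eq_mul_pow_mod hq, mul_pow_mod_pow_sub_one (Nat.mod_lt j hm).le ha]
  exact H _ (Nat.mod_lt j hm)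

lemma pos_mod_pow_of_not_dvd {q a k : ℕ} (hk : k ≠ 0) (hqa : ¬ q ∣ a) : 0 < a % q ^ k :=
  Nat.pos_of_ne_zero fun h0 => hqa ((dvd_pow_self q hk).trans (Nat.dvd_of_mod_eq_zero h0))

lemma div_mod_pow_eq {q h s t : ℕ} (ht : t < q ^ h) :
    (s * q ^ h + t) / q ^ h = s ∧ (s * q ^ h + t) % q ^ h = t :=
  (Nat.div_mod_unique (by omega)).2 ⟨by ring, ht⟩

lemma pow_succ_lt_pow_two_mul_sub_one {q h : ℕ} (hq : 2 ≤ q) (hh : 2 ≤ h) :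
    q ^ (h + 1) < q ^ (2 * h) - 1 := by
  have hsplit : q ^ (2 * h) = q ^ (h + 1) * q ^ (h - 1) := by rw [← pow_add]; congr 1; omega
  have h1 : 2 ≤ q ^ (h - 1) := hq.trans (Nat.le_self_pow (by omega) q)
  have h2 : 2 ≤ q ^ (h + 1) := hq.trans (Nat.le_self_pow (by omega) q)
  have := Nat.mul_le_mul_left (q ^ (h + 1)) h1
  omega

lemma not_dvd_mul_pow_add {q h s t : ℕ} (hh : h ≠ 0) (ht0 : 0 < t) (htq : t < q) :
    ¬ q ∣ s * q ^ h + t :=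
  (Nat.dvd_add_right (Dvd.dvd.mul_left (dvd_pow_self q hh) s)).not.2
    (Nat.not_dvd_of_pos_of_lt ht0 htq)

lemma sum_range_sub_one (n : ℕ) : ∑ s ∈ Finset.range n, (s - 1) = (n - 1) * (n - 2) / 2 := by
  cases n with
  | zero => rfl
  | succ n => simp [Finset.sum_range_succ', Finset.sum_range_id]

section

variable {q h a : ℕ}

lemma isCosetLeader_of_div_le_mod (hq : 2 ≤ q) (hh : 2 ≤ h) (ha : a < q ^ (h + 1))
    (hqa : ¬ q ∣ a) (hst : a / q ^ h ≤ a % q ^ h) : IsCosetLeader q (q ^ (2 * h) - 1) a := by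
  rw [isCosetLeader_iff_forall_lt (ha.trans (pow_succ_lt_pow_two_mul_sub_one hq hh))]
  intro j hj
  rcases lt_trichotomy j h with hjh | rfl | hjh
  · have hlt : a < q ^ (2 * h - j) := ha.trans_le (Nat.pow_le_pow_right (by omega) (by omega))
    rw [Nat.div_eq_of_lt hlt, Nat.mod_eq_of_lt hlt, zero_add]
    exact Nat.le_mul_of_pos_right a (by positivity)
  · rw [show 2 * j - j = j by omega]
    have hdiv := Nat.mod_add_div a (q ^ j)
    have hP : 1 ≤ q ^ j := Nat.one_le_pow _ _ (by omega)
    nlinarith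
  · calc a ≤ q ^ j := ha.le.trans (Nat.pow_le_pow_right (by omega) hjh)
      _ ≤ a % q ^ (2 * h - j) * q ^ j :=
        Nat.le_mul_of_pos_left _ (pos_mod_pow_of_not_dvd (by omega) hqa)
      _ ≤ _ := Nat.le_add_left _ _

lemma not_isCosetLeader_of_mod_lt_div (hq : 2 ≤ q) (ha : a < q ^ (2 * h) - 1)
    (hts : a % q ^ h < a / q ^ h) : ¬ IsCosetLeader q (q ^ (2 * h) - 1) a := by
  have hh : h ≠ 0 := by rintro rfl; simp at ha
  have hP : 1 < q ^ h := Nat.one_lt_pow hh (by omega)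
  rw [isCosetLeader_iff_forall_lt ha]
  intro H
  have hrot := H h (by omega)
  rw [show 2 * h - h = h by omega] at hrot
  have hdiv := Nat.mod_add_div a (q ^ h)
  nlinarith

lemma isCosetLeader_iff_div_le_mod (hq : 2 ≤ q) (hh : 2 ≤ h) (ha : a < q ^ (h + 1))
    (hqa : ¬ q ∣ a) : IsCosetLeader q (q ^ (2 * h) - 1) a ↔ a / q ^ h ≤ a % q ^ h :=
  ⟨fun H => not_lt.1 fun hts => not_isCosetLeader_of_mod_lt_div hq
      (ha.trans (pow_succ_lt_pow_two_mul_sub_one hq hh)) hts H,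
    isCosetLeader_of_div_le_mod hq hh ha hqa⟩

lemma setOf_not_isCosetLeader_eq_image (hq : 2 ≤ q) (hh : 2 ≤ h) :
    {a : ℕ | q ^ h + 1 ≤ a ∧ a ≤ q ^ (h + 1) ∧ ¬ q ∣ a ∧
      ¬ IsCosetLeader q (q ^ (2 * h) - 1) a} =
      ↑(((Finset.range q).sigma fun s => Finset.Ico 1 s).image
        fun p => p.1 * q ^ h + p.2) := by
  ext a
  simp only [Set.mem_ofPred_eq, Finset.coe_image, Set.mem_image, Finset.mem_coe,
    Finset.mem_sigma, Finset.mem_range, Finset.mem_Ico]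
  constructor
  · rintro ⟨-, hle, hqa, hnl⟩
    have ha : a < q ^ (h + 1) :=
      lt_of_le_of_ne hle fun he => hqa (he ▸ dvd_pow_self q (by omega))
    refine ⟨⟨a / q ^ h, a % q ^ h⟩, ⟨?_, pos_mod_pow_of_not_dvd (by omega) hqa,
      not_le.1 ((isCosetLeader_iff_div_le_mod hq hh ha hqa).not.1 hnl)⟩, Nat.div_add_mod' a _⟩
    rwa [Nat.div_lt_iff_lt_mul (by positivity), ← pow_succ']
  · rintro ⟨⟨s, t⟩, ⟨hs, ht0, hts⟩, rfl⟩
    dsimp only at hs ht0 hts ⊢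
    have htq : t < q ^ h := hts.trans (hs.trans_le (Nat.le_self_pow (by omega) q))
    obtain ⟨hdiv, hmod⟩ := div_mod_pow_eq (s := s) htq
    have hupper : s * q ^ h + t < q ^ (h + 1) := by
      rw [pow_succ]; nlinarith [Nat.mul_le_mul_left (q ^ h) hs]
    have hqa : ¬ q ∣ s * q ^ h + t := not_dvd_mul_pow_add (by omega) ht0 (hts.trans hs)
    refine ⟨by nlinarith, hupper.le, hqa, ?_⟩
    rw [isCosetLeader_iff_div_le_mod hq hh hupper hqa, hdiv, hmod]
    omega

lemma card_image_sigma_Ico (hh : h ≠ 0) :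
    (((Finset.range q).sigma fun s => Finset.Ico 1 s).image
      fun p => p.1 * q ^ h + p.2).card = (q - 1) * (q - 2) / 2 := by
  rw [Finset.card_image_of_injOn, Finset.card_sigma]
  · simp only [Nat.card_Ico]
    exact sum_range_sub_one q
  rintro ⟨s, t⟩ hst ⟨s', t'⟩ hst' heq
  simp only [Finset.coe_sigma, Set.mem_sigma_iff, Finset.coe_range, Set.mem_Iio,
    Finset.coe_Ico, Set.mem_Ico] at hst hst' heq
  have hqh := Nat.le_self_pow hh q
  obtain ⟨hs, ht⟩ := div_mod_pow_eq (s := s) (by omega : t < q ^ h)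
  obtain ⟨hs', ht'⟩ := div_mod_pow_eq (s := s') (by omega : t' < q ^ h)
  rw [heq] at hs ht
  rw [← hs, ← ht, hs', ht']

lemma not_isCosetLeader_two_mul_pow_add_one (hq : 2 ≤ q) (hh : 2 ≤ h) :
    ¬ IsCosetLeader q (q ^ (2 * h) - 1) (2 * q ^ h + 1) := by
  have h4 : 4 ≤ q ^ h := (Nat.pow_le_pow_left hq 2).trans (Nat.pow_le_pow_right (by omega) hh)
  obtain ⟨hdiv, hmod⟩ := div_mod_pow_eq (s := 2) (by omega : 1 < q ^ h)
  refine not_isCosetLeader_of_mod_lt_div hq ?_ (by rw [hdiv, hmod]; omega)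
  rw [two_mul h, pow_add]
  have := Nat.mul_le_mul_right (q ^ h) h4
  omega

lemma isCosetLeader_of_lt_two_mul_pow_add_one (hq : 2 ≤ q) (hh : 2 ≤ h)
    (ha : a < 2 * q ^ h + 1) (hqa : ¬ q ∣ a) : IsCosetLeader q (q ^ (2 * h) - 1) a := by
  have hne : a ≠ 2 * q ^ h := fun he => hqa (he ▸ Dvd.dvd.mul_left (dvd_pow_self q (by omega)) 2)
  have hlt : a < q ^ (h + 1) := by
    rw [pow_succ]
    have := Nat.mul_le_mul_left (q ^ h) hq
    omega
  rw [isCosetLeader_iff_div_le_mod hq hh hlt hqa]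
  have hs : a / q ^ h < 2 := Nat.div_lt_of_lt_mul (by omega)
  have := pos_mod_pow_of_not_dvd (by omega : h ≠ 0) hqa
  omega

end

theorem stmt_11 (q m : ℕ) (hq : IsPrimePow q) (hm : Even m) (hm4 : 4 ≤ m) :
    {a : ℕ | q ^ (m / 2) + 1 ≤ a ∧ a ≤ q ^ (m / 2 + 1) ∧ ¬ q ∣ a ∧
      ¬ IsCosetLeader q (q ^ m - 1) a}.ncard = (q - 1) * (q - 2) / 2 ∧
    IsLeast {a : ℕ | 0 < a ∧ ¬ q ∣ a ∧ ¬ IsCosetLeader q (q ^ m - 1) a}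
      (2 * q ^ (m / 2) + 1) := by
  obtain ⟨h, rfl⟩ := hm
  have hq2 := hq.two_le
  have hh : 2 ≤ h := by omega
  rw [← two_mul, Nat.mul_div_cancel_left h two_pos]
  refine ⟨?_, ⟨by omega, not_dvd_mul_pow_add (by omega) one_pos hq2,
    not_isCosetLeader_two_mul_pow_add_one hq2 hh⟩, ?_⟩
  · rw [setOf_not_isCosetLeader_eq_image hq2 hh, Set.ncard_coe_finset,
      card_image_sigma_Ico (by omega)]
  · rintro a ⟨-, hqa, hnl⟩
    by_contra! hlt
    exact hnl (isCosetLeader_of_lt_two_mul_pow_add_one hq2 hh hlt hqa)
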